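/- A subset I of 𝟛^X satisfies Ann²(I) = I if and only if there exists Y ⊆ X such that (P1) every α ∈ I takes the value U at every point of Y, and (P2) every function f : X∖Y → 𝟛 extends to some α ∈ I with α restricted to X∖Y equal to f. Consequently the closed sets are exactly the sets I_A = {α : α(y) = U for all y ∈ A} for A ⊆ X, and they form a Boolean algebra isomorphic to the powerset algebra 2^X (via I_A ↦ Aᶜ), with ¬I = Ann(I), I₁ ∧ I₂ = I₁ ∩ I₂, and I₁ ∨ I₂ = Ann(Ann(I₁) ∩ Ann(I₂)). -/
import Mathlib


/-- The three truth values of McCarthy's three-valued logic. -/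
inductive Three : Type
  | T | F | U
deriving DecidableEq

open Three

/-- Negation in `𝟛`. -/
def tneg : Three → Three
  | T => F
  | F => T
  | U => U

/-- McCarthy's left-sequential conjunction. -/
def tand : Three → Three → Three
  | T, x => x
  | F, _ => F
  | U, _ => U

/-- McCarthy's left-sequential disjunction. -/
def tor : Three → Three → Three
  | T, _ => T
  | F, x => x
  | U, _ => U

/-- Pointwise disjunction on `𝟛^X`. -/
def fOr {X : Type*} (α β : X → Three) : X → Three := fun x => tor (α x) (β x)

/-- Pointwise conjunction on `𝟛^X`. -/
def fAnd {X : Type*} (α β : X → Three) : X → Three := fun x => tand (α x) (β x)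

/-- Pointwise negation on `𝟛^X`. -/
def fNeg {X : Type*} (α : X → Three) : X → Three := fun x => tneg (α x)

/-- The constant function `F`, the bottom element of `𝟛^X`. -/
def bF {X : Type*} : X → Three := fun _ => F

/-- The order on `𝟛^X`: `α ≤ β` iff `α ∨ β = β`. -/
def fLe {X : Type*} (α β : X → Three) : Prop := fOr α β = β

/-- `α` is an atom of `𝟛^X`: `α ≠ F` and any `b` with `F ≤ b ≤ α`, `b ≠ α` is `F`. -/
def IsAtom3 {X : Type*} (α : X → Three) : Prop :=
  α ≠ bF ∧ ∀ β : X → Three, fLe bF β → fLe β α → β ≠ α → β = bF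

/-- The annihilator of a subset of `𝟛^X` under the if-then-else action. -/
def Ann3 {X : Type*} (S : Set (X → Three)) : Set (X → Three) :=
  {α | ∀ β ∈ S, fOr (fAnd α β) (fAnd (fNeg α) β) = fun _ => Three.U}

/-- `I_A = {α ∈ 𝟛^X : α(y) = U for all y ∈ A}`. -/
def IA {X : Type*} (A : Set X) : Set (X → Three) :=
  {α | ∀ y ∈ A, α y = Three.U}


open Classical in
/-- The function that is `T` at `x` and `U` elsewhere. -/
noncomputable def dlt {X : Type*} (x : X) : X → Three :=
  fun y => if y = x then Three.T else Three.U

lemma tkey (a b : Three) :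
    tor (tand a b) (tand (tneg a) b) = Three.U ↔ (a = Three.U ∨ b = Three.U) := by
  cases a <;> cases b <;> decide

lemma mem_Ann3 {X : Type*} {S : Set (X → Three)} {α : X → Three} :
    α ∈ Ann3 S ↔ ∀ β ∈ S, ∀ x, α x = Three.U ∨ β x = Three.U := by
  simp only [Ann3, Set.mem_setOf_eq, funext_iff, fOr, fAnd, fNeg, tkey]

lemma Ann3_eq {X : Type*} (S : Set (X → Three)) :
    Ann3 S = IA {x | ∃ β ∈ S, β x ≠ Three.U} := by
  ext α
  rw [mem_Ann3]
  simp only [IA, Set.mem_setOf_eq]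
  constructor
  · rintro h y ⟨β, hβ, hne⟩
    rcases h β hβ y with h' | h'
    · exact h'
    · exact absurd h' hne
  · intro h β hβ x
    by_cases hb : β x = Three.U
    · exact Or.inr hb
    · exact Or.inl (h x ⟨β, hβ, hb⟩)

lemma dlt_mem_IA {X : Type*} {A : Set X} {x : X} (hx : x ∉ A) : dlt x ∈ IA A := by
  intro y hy
  have : y ≠ x := fun h => hx (h ▸ hy)
  simp [dlt, this]

lemma supp_IA {X : Type*} (A : Set X) :
    {x | ∃ β ∈ IA A, β x ≠ Three.U} = Aᶜ := by
  ext x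
  simp only [Set.mem_setOf_eq, Set.mem_compl_iff]
  constructor
  · rintro ⟨β, hβ, hne⟩ hx
    exact hne (hβ x hx)
  · intro hx
    refine ⟨dlt x, dlt_mem_IA hx, ?_⟩
    simp [dlt]

lemma Ann3_IA {X : Type*} (A : Set X) : Ann3 (IA A) = IA Aᶜ := by
  rw [Ann3_eq, supp_IA]

lemma IA_union {X : Type*} (A B : Set X) : IA (A ∪ B) = IA A ∩ IA B := by
  ext α
  simp only [IA, Set.mem_inter_iff, Set.mem_setOf_eq, Set.mem_union]
  constructor
  · intro h
    exact ⟨fun y hy => h y (Or.inl hy), fun y hy => h y (Or.inr hy)⟩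
  · rintro ⟨h₁, h₂⟩ y (hy | hy)
    · exact h₁ y hy
    · exact h₂ y hy

lemma IA_inj {X : Type*} : Function.Injective (IA (X := X)) := by
  have key : ∀ A B : Set X, IA A = IA B → A ⊆ B := by
    intro A B h x hx
    by_contra hxB
    have : dlt x ∈ IA A := h ▸ dlt_mem_IA hxB
    have := this x hx
    simp [dlt] at this
  intro A B h
  exact subset_antisymm (key A B h) (key B A h.symm)

lemma IA_props {X : Type*} (A : Set X) :
    (∀ α ∈ IA A, ∀ y ∈ A, α y = Three.U) ∧
      ∀ f : {x : X // x ∉ A} → Three, ∃ α ∈ IA A, ∀ x : {x : X // x ∉ A}, α x = f x := by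
  constructor
  · intro α hα y hy; exact hα y hy
  · intro f
    classical
    refine ⟨fun x => if h : x ∈ A then Three.U else f ⟨x, h⟩, ?_, ?_⟩
    · intro y hy; simp [hy]
    · intro x; simp [x.2]

lemma closed_iff_IA {X : Type*} (I : Set (X → Three)) :
    Ann3 (Ann3 I) = I ↔ ∃ A : Set X, I = IA A := by
  constructor
  · intro h
    exact ⟨_, h.symm.trans (Ann3_eq (Ann3 I))⟩
  · rintro ⟨A, rfl⟩
    rw [Ann3_IA, Ann3_IA, compl_compl]

/-- Characterisation of the closed sets of `𝟛^X` under `Ann²`: they are exactly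
the sets `I_A`, and they form a Boolean algebra isomorphic to `2^X` via
`I_A ↦ Aᶜ`, with `¬I = Ann I`, `I₁ ∧ I₂ = I₁ ∩ I₂` and
`I₁ ∨ I₂ = Ann (Ann I₁ ∩ Ann I₂)`. -/
theorem stmt19 {X : Type*} :
    (∀ I : Set (X → Three), Ann3 (Ann3 I) = I ↔
      ∃ Y : Set X, (∀ α ∈ I, ∀ y ∈ Y, α y = Three.U) ∧
        ∀ f : {x : X // x ∉ Y} → Three, ∃ α ∈ I, ∀ x : {x : X // x ∉ Y}, α x = f x) ∧
    (∀ I : Set (X → Three), Ann3 (Ann3 I) = I ↔ ∃ A : Set X, I = IA A) ∧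
    Set.BijOn (fun B : Set X => IA Bᶜ) Set.univ {I | Ann3 (Ann3 I) = I} ∧
    (∀ B : Set X, IA Bᶜᶜ = Ann3 (IA Bᶜ)) ∧
    (∀ B₁ B₂ : Set X, IA (B₁ ∩ B₂)ᶜ = IA B₁ᶜ ∩ IA B₂ᶜ) ∧
    (∀ B₁ B₂ : Set X, IA (B₁ ∪ B₂)ᶜ = Ann3 (Ann3 (IA B₁ᶜ) ∩ Ann3 (IA B₂ᶜ))) := by
  refine ⟨?_, closed_iff_IA, ⟨?_, ?_, ?_⟩, ?_, ?_, ?_⟩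
  · -- Part 1
    intro I
    constructor
    · intro h
      obtain ⟨A, rfl⟩ := (closed_iff_IA I).mp h
      exact ⟨A, IA_props A⟩
    · rintro ⟨Y, h1, h2⟩
      have hIY : I = IA Y := by
        apply subset_antisymm
        · intro α hα y hy; exact h1 α hα y hy
        · intro α hα
          obtain ⟨β, hβ, hβf⟩ := h2 (fun x => α x.1)
          have : β = α := by
            funext x
            by_cases hx : x ∈ Y
            · rw [h1 β hβ x hx, hα x hx]
            · exact hβf ⟨x, hx⟩
          exact this ▸ hβ
      rw [hIY, Ann3_IA, Ann3_IA, compl_compl]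
  · -- MapsTo
    intro B _
    exact (closed_iff_IA _).mpr ⟨Bᶜ, rfl⟩
  · -- InjOn
    intro A _ B _ h
    have := IA_inj h
    exact compl_injective this
  · -- SurjOn
    intro I hI
    obtain ⟨A, rfl⟩ := (closed_iff_IA I).mp hI
    exact ⟨Aᶜ, Set.mem_univ _, by simp [compl_compl]⟩
  · -- neg
    intro B
    rw [Ann3_IA]
  · -- inf
    intro B₁ B₂
    rw [Set.compl_inter, IA_union]
  · -- sup
    intro B₁ B₂
    rw [Ann3_IA, Ann3_IA, compl_compl, compl_compl, ← IA_union, Ann3_IA, Set.compl_union]
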